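/- arXiv:0710.5360 — 6 statements merged into one kernel-verified Lean document; each statement's English description precedes it below -/
import Mathlib

section
/- For every positive integer n and every positive integer p, one has (-1)^{p+1} · n · ∫₀¹ (1-t)^{n-1} (log t)^p dt = p! · Σ_{k=1}^{n} C(n,k) · (-1)^k / k^p. -/
/-!
Expanding `(1 - t) ^ (n - 1)` by the binomial theorem reduces the integral to the moments
`∫₀¹ t ^ j (log t) ^ p`, which the substitution `t = exp (-u)` turns into Gamma integrals:
`∫₀^∞ u ^ p exp (-(j + 1) u) du = p! / (j + 1) ^ (p + 1)`. The identity
`n * C(n - 1, j) = C(n, j + 1) * (j + 1)` then absorbs one factor `j + 1`, and the shift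
`k = j + 1` gives the sum on the right.
-/

open MeasureTheory Set Real
open scoped Nat

lemma image_exp_neg_Ioi_zero : (fun u : ℝ => exp (-u)) '' Ioi 0 = Ioo 0 1 := by
  rw [← exp_zero, ← image_exp_Iio, ← neg_zero, ← image_neg_Ioi, image_image, neg_zero]

theorem integral_Ioo_zero_one_eq_integral_comp_exp_neg {E : Type*} [NormedAddCommGroup E]
    [NormedSpace ℝ E] (g : ℝ → E) :
    ∫ t in Ioo 0 1, g t = ∫ u in Ioi 0, exp (-u) • g (exp (-u)) := by
  rw [← image_exp_neg_Ioi_zero, integral_image_eq_integral_abs_deriv_smul measurableSet_Ioi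
    (fun u _ => (hasDerivAt_neg u).exp.hasDerivWithinAt)
    (fun _ _ _ _ h => neg_injective (exp_injective h))]
  simp [abs_of_pos (exp_pos _)]

theorem integral_pow_mul_exp_neg_mul_Ioi (p : ℕ) {r : ℝ} (hr : 0 < r) :
    ∫ u in Ioi 0, u ^ p * exp (-(r * u)) = p ! / r ^ (p + 1) := by
  have h := integral_rpow_mul_exp_neg_mul_Ioi (a := p + 1) (by positivity) hr
  rw [add_sub_cancel_right, Gamma_nat_eq_factorial, ← Nat.cast_succ, rpow_natCast] at h
  simp_rw [rpow_natCast] at h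
  rw [h, one_div, inv_pow, inv_mul_eq_div]

theorem integral_pow_mul_log_pow (j p : ℕ) :
    ∫ t in (0 : ℝ)..1, t ^ j * log t ^ p = (-1) ^ p * p ! / (j + 1) ^ (p + 1) := by
  rw [intervalIntegral.integral_of_le zero_le_one, integral_Ioc_eq_integral_Ioo,
    integral_Ioo_zero_one_eq_integral_comp_exp_neg]
  have h : ∀ u : ℝ, exp (-u) • (exp (-u) ^ j * log (exp (-u)) ^ p)
      = (-1) ^ p * (u ^ p * exp (-((j + 1) * u))) := by
    intro u
    rw [smul_eq_mul, log_exp, ← exp_nat_mul, neg_pow, ← mul_assoc, ← exp_add]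
    ring_nf
  simp_rw [h]
  rw [integral_const_mul, integral_pow_mul_exp_neg_mul_Ioi p (by positivity), mul_div_assoc]

theorem intervalIntegrable_pow_mul_log_pow (j p : ℕ) :
    IntervalIntegrable (fun t : ℝ => t ^ j * log t ^ p) volume 0 1 := by
  -- a non-integrable function would have Bochner integral `0`
  refine (intervalIntegrable_iff_integrableOn_Ioc_of_le zero_le_one).2
    (Integrable.of_integral_ne_zero ?_)
  rw [← intervalIntegral.integral_of_le zero_le_one, integral_pow_mul_log_pow]
  positivity

theorem integral_one_sub_pow_mul_log_pow (m p : ℕ) :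
    ∫ t in (0 : ℝ)..1, (1 - t) ^ m * log t ^ p =
      ∑ j ∈ Finset.range (m + 1),
        (m.choose j : ℝ) * (-1) ^ j * ((-1) ^ p * p ! / (j + 1) ^ (p + 1)) := by
  have h_binomial : ∀ t : ℝ, (1 - t) ^ m * log t ^ p =
      ∑ j ∈ Finset.range (m + 1), m.choose j * (-1) ^ j * (t ^ j * log t ^ p) := by
    intro t
    rw [← neg_add_eq_sub, add_pow, Finset.sum_mul]
    refine Finset.sum_congr rfl fun j _ => ?_
    rw [neg_pow]
    ring
  simp_rw [h_binomial]
  rw [intervalIntegral.integral_finsetSum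
    fun j _ => (intervalIntegrable_pow_mul_log_pow j p).const_mul _]
  simp_rw [intervalIntegral.integral_const_mul, integral_pow_mul_log_pow]

theorem stmt_0_general (n p : ℕ) :
    (-1 : ℝ) ^ (p + 1) * n * ∫ t in (0:ℝ)..1, (1 - t) ^ (n - 1) * (Real.log t) ^ p =
      (p.factorial : ℝ) * ∑ k ∈ Finset.Icc 1 n, (n.choose k : ℝ) * (-1) ^ k / (k : ℝ) ^ p := by
  rcases n with _ | m
  · simp
  rw [Nat.add_sub_cancel, integral_one_sub_pow_mul_log_pow, Finset.mul_sum,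
    Finset.mul_sum, ← Finset.Ico_add_one_right_eq_Icc, Finset.sum_Ico_eq_sum_range]
  refine Finset.sum_congr (by simp) fun j _ => ?_
  have h_choose : ((m : ℝ) + 1) * m.choose j = (m + 1).choose (j + 1) * (j + 1) := by
    exact_mod_cast Nat.add_one_mul_choose_eq m j
  have h_sign : (-1 : ℝ) ^ (p + 1) * (-1) ^ p = -1 := by
    rw [← pow_add, show p + 1 + p = 2 * p + 1 by ring, pow_succ, pow_mul]; norm_num
  rw [add_comm 1 j]
  push_cast
  field_simp
  linear_combination ((m + 1) * m.choose j * (-1) ^ j * (j + 1) ^ p : ℝ) * h_sign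
    - ((-1) ^ j * (j + 1) ^ p : ℝ) * h_choose

theorem stmt_0 (n p : ℕ) (hn : 0 < n) (hp : 0 < p) :
    (-1 : ℝ) ^ (p + 1) * n * ∫ t in (0:ℝ)..1, (1 - t) ^ (n - 1) * (Real.log t) ^ p =
      (p.factorial : ℝ) * ∑ k ∈ Finset.Icc 1 n, (n.choose k : ℝ) * (-1) ^ k / (k : ℝ) ^ p :=
  stmt_0_general n p
end

section
/- For every integer q ≥ 2, Σ_{n=1}^{∞} H_n / n^q = - ∫₀¹ Li_{q-1}(1-t) · (log t)/(1-t) dt, where H_n = Σ_{k=1}^n 1/k and Li_s(x) = Σ_{n=1}^{∞} x^n/n^s. -/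
/-
Expanding `Li_s(x) = ∑ x^(n+1)/(n+1)^s` after the substitution `t = 1 - x` turns the integral
into `∑ₙ (n+1)^(-s) ∫₀¹ xⁿ (-log(1-x)) dx`. Expanding `-log(1-x) = ∑ₖ x^(k+1)/(k+1)` as well,
each of these integrals becomes the telescoping series `∑ₖ 1/((k+1)(k+n+2)) = H_{n+1}/(n+1)`.
All terms are nonnegative, so both exchanges of sum and integral are monotone convergence.
-/

/-- The n-th harmonic number `H_n = ∑_{k=1}^n 1/k`. -/
noncomputable def H (n : ℕ) : ℝ := ∑ k ∈ Finset.Icc 1 n, (1 : ℝ) / k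

/-- The polylogarithm `Li_s(x) = ∑_{n=1}^∞ x^n / n^s`. -/
noncomputable def Li (s : ℕ) (x : ℝ) : ℝ := ∑' n : ℕ, x ^ (n + 1) / ((n : ℝ) + 1) ^ s

open MeasureTheory Filter Set Topology

/- Unlike `integral_tsum`, no summability of the integrals is assumed: both sides are the real
parts of one sum in `ℝ≥0∞`, so they also agree (as junk values) when that sum is infinite. -/
theorem integral_tsum_of_nonneg {α ι : Type*} [MeasurableSpace α] [Countable ι] {μ : Measure α}
    {f : ι → α → ℝ} (hf : ∀ i, Integrable (f i) μ) (hf₀ : ∀ i, 0 ≤ᵐ[μ] f i)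
    (hsum : ∀ᵐ x ∂μ, Summable fun i ↦ f i x) :
    ∫ x, ∑' i, f i x ∂μ = ∑' i, ∫ x, f i x ∂μ := by
  have hf₀' : ∀ᵐ x ∂μ, ∀ i, 0 ≤ f i x := ae_all_iff.2 hf₀
  have hofReal : ∀ᵐ x ∂μ, ENNReal.ofReal (∑' i, f i x) = ∑' i, ENNReal.ofReal (f i x) := by
    filter_upwards [hf₀', hsum] with x hx hxs
    exact ENNReal.ofReal_tsum_of_nonneg hx hxs
  rw [integral_eq_lintegral_of_nonneg_ae (hf₀'.mono fun x hx ↦ tsum_nonneg hx)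
      (AEMeasurable.tsum fun i ↦ (hf i).aemeasurable).aestronglyMeasurable,
    lintegral_congr_ae hofReal, lintegral_tsum fun i ↦ (hf i).aemeasurable.ennreal_ofReal]
  simp_rw [← ofReal_integral_eq_lintegral_ofReal (hf _) (hf₀ _)]
  rw [ENNReal.tsum_toReal_eq fun _ ↦ ENNReal.ofReal_ne_top]
  exact tsum_congr fun i ↦ ENNReal.toReal_ofReal (integral_nonneg_of_ae (hf₀ i))

theorem hasSum_sub_succ_of_antitone {f : ℕ → ℝ} {l : ℝ} (hf : Antitone f)
    (hl : Tendsto f atTop (𝓝 l)) : HasSum (fun n ↦ f n - f (n + 1)) (f 0 - l) := by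
  rw [hasSum_iff_tendsto_nat_of_nonneg fun n ↦ sub_nonneg.2 (hf n.le_succ)]
  simpa only [Finset.sum_range_sub'] using hl.const_sub (f 0)

theorem H_eq_sum_range (m : ℕ) : H m = ∑ j ∈ Finset.range m, 1 / ((j : ℝ) + 1) := by
  rw [H, ← Finset.Ico_add_one_right_eq_Icc, Finset.sum_Ico_eq_sum_range]
  simp [add_comm]

theorem hasSum_H (m : ℕ) : HasSum (fun k : ℕ ↦ (m : ℝ) / ((k + 1) * (k + m + 1))) (H m) := by
  let f (i : ℕ) : ℝ := 1 / ((i : ℝ) + 1)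
  let g (k : ℕ) : ℝ := ∑ j ∈ Finset.range m, f (k + j)
  have hg_anti : Antitone g := fun a b hab ↦ Finset.sum_le_sum fun j _ ↦ by simp only [f]; gcongr
  have hg_lim : Tendsto g atTop (𝓝 0) := by
    have hf : Tendsto f atTop (𝓝 0) := tendsto_one_div_add_atTop_nhds_zero_nat
    simpa using tendsto_finsetSum (Finset.range m) fun j _ ↦ hf.comp (tendsto_add_atTop_nat j)
  have hg_sub (k : ℕ) : g k - g (k + 1) = m / ((k + 1) * (k + m + 1)) := by
    have htel := Finset.sum_range_sub' (fun j ↦ f (k + j)) m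
    simp only [g, ← Finset.sum_sub_distrib, add_right_comm k 1, ← add_assoc] at htel ⊢
    rw [htel]
    simp only [f]
    push_cast
    field_simp
    ring
  convert hasSum_sub_succ_of_antitone hg_anti hg_lim using 1
  · exact funext fun k ↦ (hg_sub k).symm
  · simp [g, f, H_eq_sum_range]

theorem integral_Ioo_pow (m : ℕ) : ∫ x in Ioo (0 : ℝ) 1, x ^ m = 1 / (m + 1) := by
  rw [← integral_Ioc_eq_integral_Ioo, ← intervalIntegral.integral_of_le zero_le_one, integral_pow]
  simp

theorem integral_pow_mul_neg_log_one_sub (n : ℕ) :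
    ∫ x in Ioo (0 : ℝ) 1, x ^ n * -Real.log (1 - x) = H (n + 1) / (n + 1) := by
  have hexp (x : ℝ) (hx : x ∈ Ioo (0 : ℝ) 1) :
      HasSum (fun k : ℕ ↦ x ^ (n + k + 1) / (k + 1)) (x ^ n * -Real.log (1 - x)) := by
    have hlog := Real.hasSum_pow_div_log_of_abs_lt_one ((abs_of_pos hx.1).trans_lt hx.2)
    exact (hlog.mul_left (x ^ n)).congr_fun fun k ↦ by ring
  calc ∫ x in Ioo (0 : ℝ) 1, x ^ n * -Real.log (1 - x)
      = ∫ x in Ioo (0 : ℝ) 1, ∑' k : ℕ, x ^ (n + k + 1) / (k + 1) :=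
        setIntegral_congr_fun measurableSet_Ioo fun x hx ↦ (hexp x hx).tsum_eq.symm
    _ = ∑' k : ℕ, ∫ x in Ioo (0 : ℝ) 1, x ^ (n + k + 1) / (k + 1) := by
        refine integral_tsum_of_nonneg (fun k ↦ ?_) (fun k ↦ ?_) ?_
        · exact ((continuous_pow _).div_const _).integrableOn_Icc.mono_set Ioo_subset_Icc_self
        · filter_upwards [ae_restrict_mem measurableSet_Ioo] with x hx
          have := hx.1
          positivity
        · filter_upwards [ae_restrict_mem measurableSet_Ioo] with x hx
          exact (hexp x hx).summable
    _ = ∑' k : ℕ, ((n + 1 : ℕ) : ℝ) / ((k + 1) * (k + (n + 1 : ℕ) + 1)) / (n + 1) := by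
        refine tsum_congr fun k ↦ ?_
        rw [integral_div, integral_Ioo_pow]
        push_cast
        field_simp
        ring
    _ = H (n + 1) / (n + 1) := by
        exact_mod_cast ((hasSum_H (n + 1)).div_const _).tsum_eq

theorem integrableOn_pow_mul_neg_log_one_sub (n : ℕ) :
    IntegrableOn (fun x : ℝ ↦ x ^ n * -Real.log (1 - x)) (Ioo 0 1) := by
  have hlog : IntervalIntegrable (fun x ↦ Real.log (1 - x)) volume 0 1 := by
    simpa using (intervalIntegral.intervalIntegrable_log' (a := 1) (b := 0)).comp_sub_left 1
  exact ((intervalIntegrable_iff_integrableOn_Ioc_of_le zero_le_one).1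
    (hlog.neg.continuousOn_mul (continuous_pow n).continuousOn)).mono_set Ioo_subset_Ioc_self

theorem summable_Li (s : ℕ) {x : ℝ} (hx : |x| < 1) :
    Summable fun n : ℕ ↦ x ^ (n + 1) / ((n : ℝ) + 1) ^ s := by
  refine Summable.of_norm_bounded (summable_geometric_of_lt_one (abs_nonneg x) hx) fun n ↦ ?_
  have hn : (1 : ℝ) ≤ ‖(n : ℝ) + 1‖ ^ s :=
    one_le_pow₀ (by rw [Real.norm_of_nonneg (by positivity)]; simp)
  rw [norm_div, norm_pow, norm_pow, Real.norm_eq_abs]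
  exact (div_le_self (by positivity) hn).trans (pow_le_pow_of_le_one (abs_nonneg x) hx.le n.le_succ)

theorem hasSum_neg_Li_mul_log_div (s : ℕ) {x : ℝ} (hx₀ : x ≠ 0) (hx : |x| < 1) :
    HasSum (fun n : ℕ ↦ x ^ n * -Real.log (1 - x) / ((n : ℝ) + 1) ^ s)
      (-(Li s x * Real.log (1 - x) / x)) := by
  rw [show -(Li s x * Real.log (1 - x) / x) = Li s x * (-Real.log (1 - x) / x) by ring]
  refine ((summable_Li s hx).hasSum.mul_right _).congr_fun fun n ↦ ?_
  field_simp
  ring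

theorem integral_Li_one_sub_mul_log_div (s : ℕ) :
    ∫ t in (0 : ℝ)..1, Li s (1 - t) * Real.log t / (1 - t)
      = ∫ x in Ioo (0 : ℝ) 1, Li s x * Real.log (1 - x) / x := by
  rw [← integral_Ioc_eq_integral_Ioo, ← intervalIntegral.integral_of_le zero_le_one]
  simpa using intervalIntegral.integral_comp_sub_left (a := 0) (b := 1)
    (fun x ↦ Li s x * Real.log (1 - x) / x) 1

theorem stmt_2 (q : ℕ) (hq : 2 ≤ q) :
    ∑' n : ℕ, H (n + 1) / ((n : ℝ) + 1) ^ q =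
      -∫ t in (0:ℝ)..1, Li (q - 1) (1 - t) * Real.log t / (1 - t) := by
  obtain ⟨s, rfl⟩ : ∃ s, q = s + 1 := ⟨q - 1, by omega⟩
  calc ∑' n : ℕ, H (n + 1) / ((n : ℝ) + 1) ^ (s + 1)
      = ∑' n : ℕ, ∫ x in Ioo (0 : ℝ) 1, x ^ n * -Real.log (1 - x) / ((n : ℝ) + 1) ^ s := by
        refine tsum_congr fun n ↦ ?_
        rw [integral_div, integral_pow_mul_neg_log_one_sub, div_div, pow_succ']
    _ = ∫ x in Ioo (0 : ℝ) 1, ∑' n : ℕ, x ^ n * -Real.log (1 - x) / ((n : ℝ) + 1) ^ s := by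
        refine (integral_tsum_of_nonneg (fun n ↦ ?_) (fun n ↦ ?_) ?_).symm
        · exact (integrableOn_pow_mul_neg_log_one_sub n).div_const _
        · filter_upwards [ae_restrict_mem measurableSet_Ioo] with x hx
          have hlog : Real.log (1 - x) ≤ 0 :=
            Real.log_nonpos (by linarith [hx.2]) (by linarith [hx.1])
          exact div_nonneg (mul_nonneg (pow_nonneg hx.1.le n) (neg_nonneg.2 hlog)) (by positivity)
        · filter_upwards [ae_restrict_mem measurableSet_Ioo] with x hx
          exact (hasSum_neg_Li_mul_log_div s hx.1.ne' ((abs_of_pos hx.1).trans_lt hx.2)).summable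
    _ = -∫ t in (0 : ℝ)..1, Li (s + 1 - 1) (1 - t) * Real.log t / (1 - t) := by
        rw [Nat.add_sub_cancel, integral_Li_one_sub_mul_log_div, ← integral_neg]
        refine setIntegral_congr_fun measurableSet_Ioo fun x hx ↦ ?_
        exact (hasSum_neg_Li_mul_log_div s hx.1.ne' ((abs_of_pos hx.1).trans_lt hx.2)).tsum_eq
end

section
/- Σ_{n=1}^{∞} H_n / n³ = (1/2)·ζ(2)², where H_n = Σ_{k=1}^n 1/k is the n-th harmonic number and ζ is the Riemann zeta function. -/
/-!
Euler's argument, with `x, y` ranging over the positive integers. Splitting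
`ζ(2)² = ∑ 1/(x²y²)` into the parts `x < y`, `x > y` and `x = y` gives
`ζ(2)² = 2 ∑ 1/(x²(x+y)²) + ζ(4)`, while the partial fraction decomposition
`1/(x²y²) = 1/(x²(x+y)²) + 1/(y²(x+y)²) + 2/(x(x+y)³) + 2/(y(x+y)³)`
gives `ζ(2)² = 2 ∑ 1/(x²(x+y)²) + 4 ∑ 1/(x(x+y)³)`. Hence `ζ(4) = 4 ∑ 1/(x(x+y)³)`, and summing
along the lines `x + y = n` shows `∑ 1/(x(x+y)³) = ∑ H_{n-1}/n³ = ∑ H_n/n³ - ζ(4)`.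
So `∑ H_n/n³ = 5ζ(4)/4 = π⁴/72 = ζ(2)²/2`. All series have nonnegative terms and are handled
in `ℝ≥0∞`, where they can be rearranged freely.
-/

open scoped ENNReal
open Finset Real

namespace ENNReal

theorem tsum_prod_eq_tsum_sum_antidiagonal {A : Type*} [AddCommMonoid A] [HasAntidiagonal A]
    (f : A × A → ℝ≥0∞) : ∑' p, f p = ∑' n, ∑ p ∈ antidiagonal n, f p := by
  rw [← HasAntidiagonal.sigmaAntidiagonalEquivProd.tsum_eq, ENNReal.tsum_sigma']
  exact tsum_congr fun n => (Finset.tsum_subtype (antidiagonal n) f)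

theorem tsum_add_swap {α : Type*} (f : α × α → ℝ≥0∞) :
    ∑' p, (f p + f p.swap) = 2 * ∑' p, f p := by
  rw [ENNReal.tsum_add, two_mul]
  exact congrArg _ ((Equiv.prodComm α α).tsum_eq f)

theorem tsum_prod_eq_two_mul_add_tsum_diag {f : ℕ × ℕ → ℝ≥0∞} (hf : ∀ p, f p.swap = f p) :
    ∑' p, f p = 2 * ∑' p : ℕ × ℕ, f (p.1, p.1 + p.2 + 1) + ∑' n, f (n, n) := by
  set upper : ℕ × ℕ → ℝ≥0∞ := fun p => if p.1 < p.2 then f p else 0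
  have hsplit : ∀ p, f p = (upper p + upper p.swap) + if p.1 = p.2 then f p else 0 := by
    rintro ⟨a, b⟩
    rcases lt_trichotomy a b with h | rfl | h
    · simp [upper, h, h.ne, h.not_gt]
    · simp [upper]
    · simpa [upper, h, h.ne', h.not_gt] using (hf (a, b)).symm
  have hupper : ∑' p, upper p = ∑' p : ℕ × ℕ, f (p.1, p.1 + p.2 + 1) := by
    have hinj : Function.Injective fun p : ℕ × ℕ => (p.1, p.1 + p.2 + 1) := by
      rintro ⟨a, b⟩ ⟨c, d⟩ h; simp only [Prod.mk.injEq] at h; ext <;> omega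
    rw [← hinj.tsum_eq]
    · exact tsum_congr fun p => if_pos (by omega)
    · rintro ⟨a, b⟩ h
      have hab : a < b := by by_contra hab; exact h (if_neg hab)
      exact ⟨(a, b - a - 1), by ext <;> simp; omega⟩
  have hdiag : ∑' p, (if p.1 = p.2 then f p else 0) = ∑' n, f (n, n) := by
    rw [ENNReal.tsum_prod']
    exact tsum_congr fun a => by simp
  rw [tsum_congr hsplit, ENNReal.tsum_add, tsum_add_swap, hupper, hdiag]

end ENNReal

namespace EulerSum

theorem H_eq_sum_range (n : ℕ) : H n = ∑ k ∈ range n, 1 / ((k : ℝ) + 1) := by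
  rw [H, ← Ico_add_one_right_eq_Icc, sum_Ico_eq_sum_range]
  simp [add_comm]

theorem sum_antidiagonal_one_div (n : ℕ) :
    ∑ p ∈ antidiagonal n, 1 / ((p.1 : ℝ) + 1) = H (n + 1) := by
  rw [Nat.sum_antidiagonal_eq_sum_range_succ (fun a _ => 1 / ((a : ℝ) + 1)), H_eq_sum_range]

theorem tsum_ofReal_one_div_add_one_pow {k : ℕ} {s : ℝ} (hk : k ≠ 0)
    (h : HasSum (fun n : ℕ => 1 / (n : ℝ) ^ k) s) :
    ∑' n : ℕ, ENNReal.ofReal (1 / ((n : ℝ) + 1) ^ k) = ENNReal.ofReal s := by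
  have hshift : HasSum (fun n : ℕ => 1 / ((n : ℝ) + 1) ^ k) s := by
    simpa [hk] using (hasSum_nat_add_iff' 1).mpr h
  rw [← ENNReal.ofReal_tsum_of_nonneg (fun n => by positivity) hshift.summable, hshift.tsum_eq]

/-- `∑_{a, b ≥ 1} f a b`, with negative values of `f` counting as `0`. -/
noncomputable def doubleSum (f : ℝ → ℝ → ℝ) : ℝ≥0∞ :=
  ∑' p : ℕ × ℕ, ENNReal.ofReal (f (p.1 + 1) (p.2 + 1))

theorem doubleSum_one_div_sq_mul_sq :
    doubleSum (fun x y => 1 / (x ^ 2 * y ^ 2)) = ENNReal.ofReal (π ^ 2 / 6) ^ 2 := by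
  have hterm : ∀ p : ℕ × ℕ, ENNReal.ofReal (1 / (((p.1 : ℝ) + 1) ^ 2 * ((p.2 : ℝ) + 1) ^ 2)) =
      ENNReal.ofReal (1 / ((p.1 : ℝ) + 1) ^ 2) * ENNReal.ofReal (1 / ((p.2 : ℝ) + 1) ^ 2) := by
    intro p
    rw [← ENNReal.ofReal_mul (by positivity), one_div_mul_one_div]
  rw [doubleSum, tsum_congr hterm, ENNReal.tsum_prod']
  simp_rw [ENNReal.tsum_mul_left, ENNReal.tsum_mul_right]
  rw [tsum_ofReal_one_div_add_one_pow two_ne_zero hasSum_zeta_two, ← sq]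

theorem doubleSum_eq_two_mul_add_diag {f : ℝ → ℝ → ℝ} (hf : ∀ x y, f x y = f y x) :
    doubleSum f = 2 * doubleSum (fun x y => f x (x + y)) +
      ∑' n : ℕ, ENNReal.ofReal (f (n + 1) (n + 1)) := by
  rw [doubleSum, ENNReal.tsum_prod_eq_two_mul_add_tsum_diag fun p => by rw [hf]; rfl, doubleSum]
  congr 3
  ext p
  push_cast
  ring_nf

theorem doubleSum_one_div_sq_mul_sq_eq_two_mul_add_four_mul :
    doubleSum (fun x y => 1 / (x ^ 2 * y ^ 2)) =
      2 * doubleSum (fun x y => 1 / (x ^ 2 * (x + y) ^ 2)) +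
        4 * doubleSum (fun x y => 1 / (x * (x + y) ^ 3)) := by
  have hpf : ∀ x y : ℝ, 0 < x → 0 < y → 1 / (x ^ 2 * y ^ 2) =
      (1 / (x ^ 2 * (x + y) ^ 2) + 1 / (y ^ 2 * (y + x) ^ 2)) +
        2 * (1 / (x * (x + y) ^ 3) + 1 / (y * (y + x) ^ 3)) := by
    intro x y hx hy
    field_simp
    ring
  set W : ℕ × ℕ → ℝ≥0∞ := fun p =>
    ENNReal.ofReal (1 / (((p.1 : ℝ) + 1) ^ 2 * (((p.1 : ℝ) + 1) + ((p.2 : ℝ) + 1)) ^ 2))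
  set V : ℕ × ℕ → ℝ≥0∞ := fun p =>
    ENNReal.ofReal (1 / (((p.1 : ℝ) + 1) * (((p.1 : ℝ) + 1) + ((p.2 : ℝ) + 1)) ^ 3))
  have hterm : ∀ p : ℕ × ℕ, ENNReal.ofReal (1 / (((p.1 : ℝ) + 1) ^ 2 * ((p.2 : ℝ) + 1) ^ 2)) =
      (W p + W p.swap) + 2 * (V p + V p.swap) := by
    intro p
    rw [hpf _ _ (by positivity) (by positivity), ENNReal.ofReal_add (by positivity) (by positivity),
      ENNReal.ofReal_add (by positivity) (by positivity), ENNReal.ofReal_mul zero_le_two,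
      ENNReal.ofReal_add (by positivity) (by positivity), ENNReal.ofReal_ofNat]
    rfl
  show _ = 2 * ∑' p, W p + 4 * ∑' p, V p
  rw [doubleSum, tsum_congr hterm, ENNReal.tsum_add, ENNReal.tsum_mul_left, ENNReal.tsum_add_swap,
    ENNReal.tsum_add_swap]
  ring

theorem doubleSum_add_zeta_four :
    doubleSum (fun x y => 1 / (x * (x + y) ^ 3)) + ENNReal.ofReal (π ^ 4 / 90) =
      ∑' n : ℕ, ENNReal.ofReal (H (n + 1) / ((n : ℝ) + 1) ^ 3) := by
  set g : ℕ × ℕ → ℝ≥0∞ := fun p =>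
    ENNReal.ofReal (1 / (((p.1 : ℝ) + 1) * (((p.1 + p.2 : ℕ) : ℝ) + 1) ^ 3))
  have hrows : ∑' p, g p =
      doubleSum (fun x y => 1 / (x * (x + y) ^ 3)) + ENNReal.ofReal (π ^ 4 / 90) := by
    rw [ENNReal.tsum_prod', tsum_congr fun a => tsum_eq_zero_add' ENNReal.summable,
      ENNReal.tsum_add, add_comm, doubleSum, ENNReal.tsum_prod',
      ← tsum_ofReal_one_div_add_one_pow four_ne_zero hasSum_zeta_four]
    congr 1 <;> refine tsum_congr fun a => ?_
    · exact tsum_congr fun b => by simp only [g]; push_cast; ring_nf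
    · simp only [g]; push_cast; ring_nf
  have hdiags : ∑' p, g p = ∑' n : ℕ, ENNReal.ofReal (H (n + 1) / ((n : ℝ) + 1) ^ 3) := by
    rw [ENNReal.tsum_prod_eq_tsum_sum_antidiagonal]
    refine tsum_congr fun n => ?_
    have hterm : ∀ p ∈ antidiagonal n,
        g p = ENNReal.ofReal (1 / ((p.1 : ℝ) + 1) * (1 / ((n : ℝ) + 1) ^ 3)) := by
      intro p hp
      rw [HasAntidiagonal.mem_antidiagonal] at hp
      simp only [g, hp, one_div_mul_one_div]
    rw [sum_congr rfl hterm, ← ENNReal.ofReal_sum_of_nonneg (fun p _ => by positivity), ← sum_mul,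
      sum_antidiagonal_one_div, ← div_eq_mul_one_div]
  rw [← hrows, hdiags]

theorem four_mul_tsum_ofReal_H_div_cube :
    4 * ∑' n : ℕ, ENNReal.ofReal (H (n + 1) / ((n : ℝ) + 1) ^ 3) =
      5 * ENNReal.ofReal (π ^ 4 / 90) := by
  have hdiag : doubleSum (fun x y => 1 / (x ^ 2 * y ^ 2)) =
      2 * doubleSum (fun x y => 1 / (x ^ 2 * (x + y) ^ 2)) + ENNReal.ofReal (π ^ 4 / 90) := by
    rw [doubleSum_eq_two_mul_add_diag fun x y => by ring,
      ← tsum_ofReal_one_div_add_one_pow four_ne_zero hasSum_zeta_four]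
    congr 2 with n
    ring_nf
  have hfin : 2 * doubleSum (fun x y => 1 / (x ^ 2 * (x + y) ^ 2)) ≠ ⊤ :=
    ne_top_of_le_ne_top (by rw [← hdiag, doubleSum_one_div_sq_mul_sq]; finiteness) le_self_add
  have hζ4 : ENNReal.ofReal (π ^ 4 / 90) = 4 * doubleSum (fun x y => 1 / (x * (x + y) ^ 3)) :=
    (ENNReal.add_right_inj hfin).mp
      (hdiag.symm.trans doubleSum_one_div_sq_mul_sq_eq_two_mul_add_four_mul)
  rw [← doubleSum_add_zeta_four, hζ4]
  ring

theorem tsum_H_div_cube : ∑' n : ℕ, H (n + 1) / ((n : ℝ) + 1) ^ 3 = π ^ 4 / 72 := by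
  have hnonneg : ∀ n : ℕ, 0 ≤ H (n + 1) / ((n : ℝ) + 1) ^ 3 := fun n => by
    rw [H_eq_sum_range]; positivity
  have h := congrArg ENNReal.toReal four_mul_tsum_ofReal_H_div_cube
  rw [ENNReal.toReal_mul, ENNReal.toReal_mul, ENNReal.tsum_toReal_eq fun _ => ENNReal.ofReal_ne_top,
    ENNReal.toReal_ofReal (by positivity)] at h
  simp only [ENNReal.toReal_ofReal (hnonneg _)] at h
  norm_num at h
  linarith

end EulerSum

theorem stmt_8 :
    ((∑' n : ℕ, H (n + 1) / ((n : ℝ) + 1) ^ 3 : ℝ) : ℂ) = (1 / 2) * (riemannZeta 2) ^ 2 := by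
  rw [EulerSum.tsum_H_div_cube, riemannZeta_two]
  push_cast
  ring
end

section
/- For every integer q ≥ 3, Σ_{n=1}^{∞} H_n² / n^q = ∫₀¹ ∫₀¹ Li_{q-2}[(1-t)(1-u)] · (log t)(log u) / ((1-t)(1-u)) du dt, where H_n = Σ_{k=1}^n 1/k and Li_s(x) = Σ_{n=1}^∞ x^n/n^s. -/
/-!
Expanding `Li` and dividing by `(1 - t) * (1 - u)` turns the integrand into
`∑ₙ (1 - t)ⁿ log t · (1 - u)ⁿ log u / (n + 1) ^ (q - 2)`. Each factor integrates by
`∫₀¹ (1 - t)ⁿ log t dt = -H (n + 1) / (n + 1)`, so integrating in `u` and then in `t` gives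
`∑ₙ H (n + 1) ^ 2 / (n + 1) ^ q`. Both interchanges of sum and integral are justified by the
summability of the integrals of the absolute values, which for the outer one rests on
`H n ≤ 2 √n`.
-/

open MeasureTheory Set Real

lemma H_eq_harmonic (n : ℕ) : H n = harmonic n := by
  simp [H, harmonic_eq_sum_Icc]

lemma H_succ_eq_sum_range (n : ℕ) :
    H (n + 1) = ∑ k ∈ Finset.range (n + 1), 1 / ((k : ℝ) + 1) := by
  simp [H_eq_harmonic, harmonic]

lemma H_nonneg (n : ℕ) : 0 ≤ H n :=
  Finset.sum_nonneg fun _ _ => by positivity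

lemma H_le_self (n : ℕ) : H n ≤ n := by
  simpa [H] using Finset.sum_le_card_nsmul (Finset.Icc 1 n) (fun k : ℕ => (1 : ℝ) / k) 1
    fun k hk => div_le_one_of_le₀ (by exact_mod_cast (Finset.mem_Icc.1 hk).1) (by positivity)

-- `H n ≤ 1 + log n` and `log n = 2 log √n ≤ 2 (√n - 1)`.
lemma H_le_two_mul_sqrt (n : ℕ) : H n ≤ 2 * √n := by
  rcases Nat.eq_zero_or_pos n with rfl | hn
  · simp [H]
  have hsqrt : 0 < √(n : ℝ) := sqrt_pos.2 (by exact_mod_cast hn)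
  have hlog : log n ≤ 2 * (√n - 1) := by
    have := log_le_sub_one_of_pos hsqrt
    rw [log_sqrt (Nat.cast_nonneg n)] at this
    linarith
  linarith [H_eq_harmonic n ▸ harmonic_le_one_add_log n]

lemma sq_H_le (n : ℕ) : H n ^ 2 ≤ 4 * n := by
  have h := H_le_two_mul_sqrt n
  nlinarith [H_nonneg n, sq_sqrt (Nat.cast_nonneg n : (0 : ℝ) ≤ n)]

lemma summable_sq_H_div_pow {q : ℕ} (hq : 3 ≤ q) :
    Summable fun n : ℕ => H (n + 1) ^ 2 / ((n : ℝ) + 1) ^ q := by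
  have hdom : Summable fun n : ℕ => 4 / ((n : ℝ) + 1) ^ 2 :=
    ((summable_nat_add_iff 1).2 (summable_one_div_nat_pow.2 one_lt_two)).mul_left 4
      |>.congr fun n => by push_cast; ring
  refine hdom.of_nonneg_of_le (fun n => by have := H_nonneg (n + 1); positivity) fun n => ?_
  have hn : (1 : ℝ) ≤ n + 1 := by linarith [(Nat.cast_nonneg n : (0 : ℝ) ≤ n)]
  calc H (n + 1) ^ 2 / ((n : ℝ) + 1) ^ q
      ≤ 4 * ((n : ℝ) + 1) / ((n : ℝ) + 1) ^ 3 := by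
        gcongr
        exact_mod_cast sq_H_le (n + 1)
    _ = 4 / ((n : ℝ) + 1) ^ 2 := by field_simp

lemma intervalIntegrable_one_sub_pow_mul_log (n : ℕ) :
    IntervalIntegrable (fun t : ℝ => (1 - t) ^ n * log t) volume 0 1 :=
  intervalIntegral.intervalIntegrable_log'.continuousOn_mul (by fun_prop)

-- Integration by parts against `(1 - (1 - t) ^ (n + 1)) / (n + 1)`, the primitive of `(1 - t) ^ n`
-- vanishing at `0`.
noncomputable def primitiveOneSubPowMulLog (n : ℕ) (t : ℝ) : ℝ :=
  ((1 - (1 - t) ^ (n + 1)) * log t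
    - ∑ k ∈ Finset.range (n + 1), (1 - (1 - t) ^ (k + 1)) / ((k : ℝ) + 1)) / ((n : ℝ) + 1)

lemma one_sub_one_sub_pow_eq (n : ℕ) (t : ℝ) :
    1 - (1 - t) ^ n = t * ∑ k ∈ Finset.range n, (1 - t) ^ k := by
  linear_combination geom_sum_mul (1 - t) n

lemma continuous_primitiveOneSubPowMulLog (n : ℕ) : Continuous (primitiveOneSubPowMulLog n) := by
  have h : primitiveOneSubPowMulLog n = fun t => ((∑ k ∈ Finset.range (n + 1), (1 - t) ^ k)
      * (t * log t) - ∑ k ∈ Finset.range (n + 1), (1 - (1 - t) ^ (k + 1)) / ((k : ℝ) + 1))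
      / ((n : ℝ) + 1) := by
    funext t
    rw [primitiveOneSubPowMulLog, one_sub_one_sub_pow_eq]
    ring
  rw [h]
  have := continuous_mul_log
  fun_prop

lemma hasDerivAt_primitiveOneSubPowMulLog (n : ℕ) {t : ℝ} (ht : 0 < t) :
    HasDerivAt (primitiveOneSubPowMulLog n) ((1 - t) ^ n * log t) t := by
  have hsub : HasDerivAt (fun s : ℝ => 1 - s) (-1) t := (hasDerivAt_id t).const_sub 1
  have hpow (k : ℕ) : HasDerivAt (fun s : ℝ => 1 - (1 - s) ^ (k + 1))
      (((k : ℝ) + 1) * (1 - t) ^ k) t :=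
    ((hsub.fun_pow (k + 1)).const_sub 1).congr_deriv (by push_cast; ring)
  have hsum : HasDerivAt
      (fun s => ∑ k ∈ Finset.range (n + 1), (1 - (1 - s) ^ (k + 1)) / ((k : ℝ) + 1))
      (∑ k ∈ Finset.range (n + 1), (1 - t) ^ k) t :=
    HasDerivAt.fun_sum fun k _ => ((hpow k).div_const _).congr_deriv (by field_simp)
  refine (((hpow n).fun_mul (hasDerivAt_log ht.ne')).fun_sub hsum).div_const _
    |>.congr_deriv ?_
  rw [one_sub_one_sub_pow_eq]
  field_simp
  ring

lemma integral_one_sub_pow_mul_log (n : ℕ) :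
    ∫ t in (0 : ℝ)..1, (1 - t) ^ n * log t = -H (n + 1) / ((n : ℝ) + 1) := by
  rw [intervalIntegral.integral_eq_sub_of_hasDeriv_right_of_le zero_le_one
    (continuous_primitiveOneSubPowMulLog n).continuousOn
    (fun t ht => (hasDerivAt_primitiveOneSubPowMulLog n ht.1).hasDerivWithinAt)
    (intervalIntegrable_one_sub_pow_mul_log n)]
  simp [primitiveOneSubPowMulLog, H_succ_eq_sum_range]

lemma integral_norm_one_sub_pow_mul_log (n : ℕ) :
    ∫ t in Ioc (0 : ℝ) 1, ‖(1 - t) ^ n * log t‖ = H (n + 1) / ((n : ℝ) + 1) := by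
  have hneg : ∀ t ∈ Ioc (0 : ℝ) 1, ‖(1 - t) ^ n * log t‖ = -((1 - t) ^ n * log t) :=
    fun t ht => by
      rw [norm_of_nonpos (mul_nonpos_of_nonneg_of_nonpos
        (pow_nonneg (by linarith [ht.2]) n) (log_nonpos ht.1.le ht.2))]
  rw [setIntegral_congr_fun measurableSet_Ioc hneg, integral_neg,
    ← intervalIntegral.integral_of_le zero_le_one, integral_one_sub_pow_mul_log]
  ring

lemma integral_tsum_mul_one_sub_pow_mul_log (c : ℕ → ℝ)
    (hc : Summable fun n => |c n| * (H (n + 1) / ((n : ℝ) + 1))) :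
    ∫ t in Ioc (0 : ℝ) 1, ∑' n, c n * ((1 - t) ^ n * log t)
      = -∑' n, c n * (H (n + 1) / ((n : ℝ) + 1)) := by
  have hint (n : ℕ) : IntegrableOn (fun t => c n * ((1 - t) ^ n * log t)) (Ioc 0 1) :=
    (intervalIntegrable_one_sub_pow_mul_log n).1.const_mul (c n)
  rw [← integral_tsum_of_summable_integral_norm hint, ← tsum_neg]
  · refine tsum_congr fun n => ?_
    rw [integral_const_mul, ← intervalIntegral.integral_of_le zero_le_one,
      integral_one_sub_pow_mul_log]
    ring
  · refine hc.congr fun n => ?_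
    simp_rw [norm_mul (c n), integral_const_mul, integral_norm_one_sub_pow_mul_log,
      norm_eq_abs]

lemma Li_mul_log_mul_log_div_eq_tsum (s : ℕ) (t u : ℝ) :
    Li s ((1 - t) * (1 - u)) * (log t * log u) / ((1 - t) * (1 - u))
      = ∑' n : ℕ, (1 - t) ^ n * log t / ((n : ℝ) + 1) ^ s * ((1 - u) ^ n * log u) := by
  rcases eq_or_ne t 1 with rfl | ht
  · simp
  rcases eq_or_ne u 1 with rfl | hu
  · simp
  have ht' : 1 - t ≠ 0 := sub_ne_zero.2 (Ne.symm ht)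
  have hu' : 1 - u ≠ 0 := sub_ne_zero.2 (Ne.symm hu)
  rw [Li, ← tsum_mul_right, ← tsum_div_const]
  refine tsum_congr fun n => ?_
  rw [pow_succ, mul_pow]
  field_simp

lemma summable_abs_mul_H_div_of_abs_le_geometric {c : ℕ → ℝ} {C r : ℝ} (hr₀ : 0 ≤ r)
    (hr₁ : r < 1) (hc : ∀ n, |c n| ≤ C * r ^ n) :
    Summable fun n => |c n| * (H (n + 1) / ((n : ℝ) + 1)) := by
  refine ((summable_geometric_of_lt_one hr₀ hr₁).mul_left C).of_nonneg_of_le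
    (fun n => by have := H_nonneg (n + 1); positivity) fun n => ?_
  have hH : H (n + 1) / ((n : ℝ) + 1) ≤ 1 :=
    div_le_one_of_le₀ (by exact_mod_cast H_le_self (n + 1)) (by positivity)
  simpa using mul_le_mul (hc n) hH (by have := H_nonneg (n + 1); positivity)
    ((abs_nonneg _).trans (hc n))

lemma integral_Li_kernel_eq_tsum (s : ℕ) {t : ℝ} (ht : t ∈ Ioc (0 : ℝ) 1) :
    ∫ u in Ioc (0 : ℝ) 1, Li s ((1 - t) * (1 - u)) * (log t * log u) / ((1 - t) * (1 - u))
      = ∑' n, -(H (n + 1) / ((n : ℝ) + 1) ^ (s + 1)) * ((1 - t) ^ n * log t) := by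
  have hr : 0 ≤ 1 - t := by linarith [ht.2]
  have hc : ∀ n : ℕ, |(1 - t) ^ n * log t / ((n : ℝ) + 1) ^ s| ≤ |log t| * (1 - t) ^ n := by
    intro n
    have hpow : 1 ≤ ((n : ℝ) + 1) ^ s :=
      one_le_pow₀ (by linarith [(Nat.cast_nonneg n : (0 : ℝ) ≤ n)])
    rw [abs_div, abs_mul, abs_of_nonneg (pow_nonneg hr n), abs_of_pos (one_pos.trans_le hpow),
      mul_comm]
    exact div_le_self (by positivity) hpow
  simp_rw [Li_mul_log_mul_log_div_eq_tsum s t]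
  rw [integral_tsum_mul_one_sub_pow_mul_log _
    (summable_abs_mul_H_div_of_abs_le_geometric hr (by linarith [ht.1]) hc), ← tsum_neg]
  refine tsum_congr fun n => ?_
  field_simp
  ring

theorem stmt_11 (q : ℕ) (hq : 3 ≤ q) :
    ∑' n : ℕ, (H (n + 1)) ^ 2 / ((n : ℝ) + 1) ^ q =
      ∫ t in (0:ℝ)..1, ∫ u in (0:ℝ)..1,
        Li (q - 2) ((1 - t) * (1 - u)) * (Real.log t * Real.log u) / ((1 - t) * (1 - u)) := by
  obtain ⟨s, rfl⟩ : ∃ s, q = s + 2 := ⟨q - 2, by omega⟩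
  simp_rw [Nat.add_sub_cancel, intervalIntegral.integral_of_le zero_le_one]
  rw [setIntegral_congr_fun measurableSet_Ioc fun t ht => integral_Li_kernel_eq_tsum s ht,
    integral_tsum_mul_one_sub_pow_mul_log, ← tsum_neg]
  · refine tsum_congr fun n => ?_
    field_simp
    ring
  · refine (summable_sq_H_div_pow hq).congr fun n => ?_
    rw [abs_neg, abs_of_nonneg (by have := H_nonneg (n + 1); positivity)]
    field_simp
    ring
end

section
/- For every real u with 0 < u < 1, ∫₀¹ (log t) / (1 - (1-t)(1-u)) dt = (1/(1-u)) · Li₂(-(1-u)/u), where Li₂ is the dilogarithm (extended to negative arguments, e.g. by Li₂(x) = -∫₀ˣ log(1-s)/s ds). -/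
/-- The dilogarithm, defined by `Li₂(x) = -∫₀ˣ log(1-s)/s ds`. -/
noncomputable def Li2 (x : ℝ) : ℝ := -∫ s in (0:ℝ)..x, Real.log (1 - s) / s

/-!
With `c = (1 - u) / u` the integrand is `(1 - u)⁻¹ · log t · c / (1 + c t)`, and
`c / (1 + c t)` is the derivative of `log (1 + c t)`. Integrating by parts, the boundary terms
vanish (at `0` because `t log t → 0`), leaving `-∫₀¹ log (1 + c t) / t dt`, which the
substitution `s = -c t` identifies with `Li₂(-c)`.
-/

open Real MeasureTheory intervalIntegral Set Filter Topology

lemma abs_log_one_add_le {x : ℝ} (hx : 0 ≤ x) : |log (1 + x)| ≤ x := by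
  rw [abs_of_nonneg (log_nonneg (by linarith))]
  linarith [log_le_sub_one_of_pos (by linarith : 0 < 1 + x)]

section

variable {c : ℝ}

lemma tendsto_log_mul_log_one_add_mul (hc : 0 ≤ c) :
    Tendsto (fun t => log t * log (1 + c * t)) (𝓝[≥] 0) (𝓝 0) := by
  have hbound : Tendsto (fun t => c * |t * log t|) (𝓝[≥] 0) (𝓝 0) := by
    simpa using ((continuous_mul_log.tendsto 0).abs.const_mul c).mono_left nhdsWithin_le_nhds
  refine squeeze_zero_norm' ?_ hbound
  filter_upwards [self_mem_nhdsWithin] with t (ht : 0 ≤ t)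
  calc ‖log t * log (1 + c * t)‖ = |log t| * |log (1 + c * t)| := by
        rw [norm_mul, norm_eq_abs, norm_eq_abs]
    _ ≤ |log t| * (c * t) := by gcongr; exact abs_log_one_add_le (mul_nonneg hc ht)
    _ = c * |t * log t| := by rw [abs_mul, abs_of_nonneg ht]; ring

lemma continuousOn_log_mul_log_one_add_mul (hc : 0 ≤ c) :
    ContinuousOn (fun t => log t * log (1 + c * t)) (Ici 0) := by
  intro t ht
  rcases (mem_Ici.1 ht).eq_or_lt with rfl | ht
  · simpa [ContinuousWithinAt] using tendsto_log_mul_log_one_add_mul hc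
  · have : 1 + c * t ≠ 0 := by positivity
    exact ((continuousAt_log ht.ne').mul
      ((continuousAt_const.add (continuousAt_const.mul continuousAt_id)).log this))
      |>.continuousWithinAt

lemma hasDerivAt_log_mul_log_one_add_mul {t : ℝ} (ht : t ≠ 0) (hct : 1 + c * t ≠ 0) :
    HasDerivAt (fun t => log t * log (1 + c * t))
      (log (1 + c * t) / t + log t * (c / (1 + c * t))) t := by
  refine ((hasDerivAt_log ht).mul
    ((((hasDerivAt_id t).const_mul c).const_add 1).log hct)).congr_deriv ?_
  simp only [id, mul_one]
  field_simp

lemma intervalIntegrable_log_one_add_mul_div (hc : 0 ≤ c) {b : ℝ} (hb : 0 ≤ b) :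
    IntervalIntegrable (fun t => log (1 + c * t) / t) volume 0 b := by
  refine (intervalIntegrable_const (c := c)).mono_fun'
    ((measurable_log.comp (by fun_prop)).div measurable_id).aestronglyMeasurable ?_
  rw [Filter.EventuallyLE, ae_restrict_iff' measurableSet_uIoc]
  refine Eventually.of_forall fun t ht => ?_
  rw [uIoc_of_le hb] at ht
  rw [norm_div, norm_eq_abs, norm_eq_abs, abs_of_pos ht.1, div_le_iff₀ ht.1]
  exact abs_log_one_add_le (mul_nonneg hc ht.1.le)

theorem integral_log_mul_div_one_add_mul (hc : 0 ≤ c) {b : ℝ} (hb : 0 ≤ b) :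
    ∫ t in 0..b, log t * (c / (1 + c * t)) =
      log b * log (1 + c * b) - ∫ t in 0..b, log (1 + c * t) / t := by
  have hA := intervalIntegrable_log_one_add_mul_div hc hb
  have hB : IntervalIntegrable (fun t => log t * (c / (1 + c * t))) volume 0 b := by
    refine intervalIntegrable_log'.mul_continuousOn
      (continuousOn_const.div (by fun_prop) fun t ht => ?_)
    have : 0 ≤ t := (uIcc_of_le hb ▸ ht).1
    positivity
  have hFTC := integral_eq_sub_of_hasDerivAt_of_le hb
    ((continuousOn_log_mul_log_one_add_mul hc).mono Icc_subset_Ici_self)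
    (fun t ht => hasDerivAt_log_mul_log_one_add_mul ht.1.ne'
      (by have := ht.1; positivity)) (hA.add hB)
  rw [integral_add hA hB] at hFTC
  simp only [log_zero, zero_mul, sub_zero] at hFTC
  linarith

end

theorem Li2_eq_neg_integral (x : ℝ) : Li2 x = -∫ t in 0..1, log (1 - x * t) / t := by
  have hsub := smul_integral_comp_mul_left (a := 0) (b := 1) (fun s => log (1 - s) / s) x
  rw [mul_zero, mul_one] at hsub
  rw [Li2, ← hsub, smul_eq_mul, ← intervalIntegral.integral_const_mul]
  congr 2
  funext t
  rcases eq_or_ne x 0 with rfl | hx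
  · simp
  rcases eq_or_ne t 0 with rfl | ht
  · simp
  field_simp

theorem stmt_13 (u : ℝ) (hu : 0 < u) (hu1 : u < 1) :
    ∫ t in (0:ℝ)..1, Real.log t / (1 - (1 - t) * (1 - u)) =
      (1 / (1 - u)) * Li2 (-(1 - u) / u) := by
  set c := (1 - u) / u with hc_def
  have hc : 0 ≤ c := div_nonneg (by linarith) hu.le
  have hintegrand : ∀ t ∈ uIcc (0:ℝ) 1,
      log t / (1 - (1 - t) * (1 - u)) = 1 / (1 - u) * (log t * (c / (1 + c * t))) := by
    intro t ht
    rw [uIcc_of_le zero_le_one] at ht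
    have hden : 0 < u + (1 - u) * t := by nlinarith [ht.1]
    have hu1' : 1 - u ≠ 0 := by linarith
    rw [hc_def]
    field_simp
    ring
  rw [integral_congr hintegrand, intervalIntegral.integral_const_mul,
    integral_log_mul_div_one_add_mul hc zero_le_one, Li2_eq_neg_integral, neg_div, ← hc_def]
  simp
end

section
/- For every real u with 0 < u < 1, Li₂(-(1-u)/u) = -(1/2)·(log u)² - Li₂(1-u), where Li₂ is the dilogarithm. (Landen's identity.) -/
open Real Set MeasureTheory intervalIntegral

lemma continuousOn_dslope_log_one_sub :
    ContinuousOn (dslope (fun s : ℝ => log (1 - s)) 0) (Iio 1) := by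
  have hlog : ∀ x ∈ Iio (1 : ℝ), 1 - x ≠ 0 := fun x hx => sub_ne_zero.2 (ne_of_lt hx).symm
  refine (continuousOn_dslope (Iio_mem_nhds one_pos)).2 ⟨?_, ?_⟩
  · exact (continuousOn_const.sub continuousOn_id).log hlog
  · exact ((differentiableAt_id.const_sub 1).log (by norm_num))

lemma Li2_eq_neg_integral_dslope (x : ℝ) :
    Li2 x = -∫ s in (0 : ℝ)..x, dslope (fun s : ℝ => log (1 - s)) 0 s := by
  refine congrArg Neg.neg (integral_congr_ae ((Measure.ae_ne volume 0).mono fun s hs _ => ?_))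
  simp [dslope_of_ne _ hs, slope_def_field]

lemma hasDerivAt_Li2 {x : ℝ} (hx : x < 1) :
    HasDerivAt Li2 (-dslope (fun s : ℝ => log (1 - s)) 0 x) x := by
  have hc := continuousOn_dslope_log_one_sub
  have hsub : uIcc 0 x ⊆ Iio 1 := fun s hs => by
    rcases mem_uIcc.1 hs with h | h <;> simp only [mem_Iio] <;> linarith [h.2]
  rw [funext Li2_eq_neg_integral_dslope]
  exact (integral_hasDerivAt_right ((hc.mono hsub).intervalIntegrable)
    (hc.stronglyMeasurableAtFilter isOpen_Iio x hx) (hc.continuousAt (Iio_mem_nhds hx))).neg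

noncomputable def landenSum (v : ℝ) : ℝ := Li2 (1 - v⁻¹) + 1 / 2 * log v ^ 2 + Li2 (1 - v)

lemma hasDerivAt_landenSum {v : ℝ} (hv : 0 < v) : HasDerivAt landenSum 0 v := by
  have h1 : HasDerivAt (fun v => Li2 (1 - v⁻¹))
      (-dslope (fun s : ℝ => log (1 - s)) 0 (1 - v⁻¹) * (v ^ 2)⁻¹) v := by
    have hinner : HasDerivAt (fun v : ℝ => 1 - v⁻¹) (v ^ 2)⁻¹ v := by
      simpa using (hasDerivAt_inv hv.ne').const_sub 1
    exact (hasDerivAt_Li2 (by linarith [inv_pos.2 hv])).comp v hinner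
  have h2 : HasDerivAt (fun v => 1 / 2 * log v ^ 2) (log v / v) v :=
    (((hasDerivAt_log hv.ne').pow 2).const_mul (1 / 2 : ℝ)).congr_deriv (by ring)
  have h3 : HasDerivAt (fun v => Li2 (1 - v))
      (-dslope (fun s : ℝ => log (1 - s)) 0 (1 - v) * (-1)) v :=
    (hasDerivAt_Li2 (by linarith)).comp v ((hasDerivAt_id v).const_sub 1)
  refine ((h1.add h2).add h3).congr_deriv ?_
  rcases eq_or_ne v 1 with rfl | hv1
  · have hd : HasDerivAt (fun s : ℝ => log (1 - s)) (-1) 0 := by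
      simpa using ((hasDerivAt_id (0 : ℝ)).const_sub 1).log (by norm_num)
    simp [dslope_same, hd.deriv]
  · have hne : 1 - v⁻¹ ≠ 0 := sub_ne_zero.2 (by simpa [eq_comm] using hv1)
    have hne' : 1 - v ≠ 0 := sub_ne_zero.2 hv1.symm
    simp only [dslope_of_ne _ hne, dslope_of_ne _ hne', slope_def_field, sub_sub_cancel,
      sub_zero, log_one, log_inv]
    field_simp
    ring

lemma landenSum_eq_zero {v : ℝ} (hv : 0 < v) : landenSum v = 0 := by
  have hderiv := fun w (hw : w ∈ Ioi (0 : ℝ)) => hasDerivAt_landenSum hw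
  have hconst := isOpen_Ioi.is_const_of_deriv_eq_zero isPreconnected_Ioi
    (fun w hw => (hderiv w hw).differentiableAt.differentiableWithinAt)
    (fun w hw => (hderiv w hw).deriv) (mem_Ioi.2 hv) (mem_Ioi.2 one_pos)
  simpa [landenSum, Li2] using hconst

theorem stmt_14_general (u : ℝ) (hu : 0 < u) :
    Li2 (-(1 - u) / u) = -(1 / 2) * (Real.log u) ^ 2 - Li2 (1 - u) := by
  have h := landenSum_eq_zero hu
  rw [landenSum] at h
  rw [neg_sub, sub_div, div_self hu.ne', one_div]
  linarith

theorem stmt_14 (u : ℝ) (hu : 0 < u) (hu1 : u < 1) :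
    Li2 (-(1 - u) / u) = -(1 / 2) * (Real.log u) ^ 2 - Li2 (1 - u) :=
  stmt_14_general u hu
end
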